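/- arXiv:2011.11990 — 3 statements merged into one kernel-verified Lean document; each statement's English description precedes it below -/
import Mathlib

section
/- Commutator estimate for products of derivatives and boosts with a partial derivative. For any finite sequence I of indices in {0,1,2} and any finite sequence J of indices in {1,2}, there exists a constant C = C(|I|, |J|) > 0 such that for every smooth function φ supported in the cone K and every α ∈ {0,1,2}, at every point of K: |[∂^I L^J, ∂_α] φ| ≤ C Σ_{|J'| < |J|} Σ_{β ∈ {0,1,2}} |∂_β ∂^I L^{J'} φ|, where the sum runs over all finite sequences J' of indices in {1,2} of length strictly less than |J|. -/
/-!
A single boost commutes with `∂_α` up to one coordinate derivative: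
`[L_a, ∂_α] = -δ_α^a ∂_t - δ_α^0 ∂_a`. Moving `∂_α` through `L^J` one boost at a time therefore
writes `[L^J, ∂_α]` as a combination, with constant coefficients, of operators `∂_β L^{J'}` with
`|J'| < |J|`. Since `∂^I` commutes with every `∂_β`, applying it and taking absolute values gives
the estimate with a constant depending on `J` and `α`; as there are finitely many `J` of a given
length, the largest of these constants works for all of them.
-/

noncomputable section

open MeasureTheory

/-- A point of `ℝ^{1+2}`; coordinate `0` is the time `t`, coordinates `1, 2` are spatial. -/
abbrev Pt : Type := Fin 3 → ℝ

/-- The spatial radius `r = |x| = √((x¹)² + (x²)²)`. -/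
def rad (p : Pt) : ℝ := Real.sqrt ((p 1)^2 + (p 2)^2)

/-- The coordinate partial derivative `∂_i` (with `∂_0 = ∂_t`). -/
def pd (i : Fin 3) (φ : Pt → ℝ) (p : Pt) : ℝ := fderiv ℝ φ p (Pi.single i 1)

/-- `−□φ = ∂_t²φ − ∂_1²φ − ∂_2²φ`. -/
def negBox (φ : Pt → ℝ) (p : Pt) : ℝ :=
  pd 0 (pd 0 φ) p - pd 1 (pd 1 φ) p - pd 2 (pd 2 φ) p

/-- The Lorentz boost `L_a = x^a ∂_t + t ∂_a`, for `a ∈ {1,2}` (indexed by `Fin 2`,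
with `a : Fin 2` corresponding to the spatial coordinate `a.succ`). -/
def boost (a : Fin 2) (φ : Pt → ℝ) (p : Pt) : ℝ :=
  p a.succ * pd 0 φ p + p 0 * pd a.succ φ p

/-- The semi-hyperboloidal derivative `∂̲_a = (x^a/t) ∂_t + ∂_a`, `a ∈ {1,2}` (indexed by `Fin 2`). -/
def ubd (a : Fin 2) (φ : Pt → ℝ) (p : Pt) : ℝ :=
  (p a.succ / p 0) * pd 0 φ p + pd a.succ φ p

/-- `∂̲_β` for `β ∈ {0,1,2}`, with `∂̲_0 = ∂_t`. -/
def ubar (β : Fin 3) (φ : Pt → ℝ) (p : Pt) : ℝ :=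
  if β = 0 then pd 0 φ p else (p β / p 0) * pd 0 φ p + pd β φ p

/-- Iterated coordinate derivatives `∂^I`. -/
def pdSeq : List (Fin 3) → (Pt → ℝ) → Pt → ℝ
  | [], φ => φ
  | i :: I, φ => pd i (pdSeq I φ)

/-- Iterated boosts `L^J`. -/
def boostSeq : List (Fin 2) → (Pt → ℝ) → Pt → ℝ
  | [], φ => φ
  | a :: J, φ => boost a (boostSeq J φ)

/-- The interior of the light cone, `K = {(t,x) : r < t − 1}`. -/
def coneK : Set Pt := {p | rad p < p 0 - 1}

/-- The slab `K_{[s0,s1]} = {(t,x) ∈ K : s0² ≤ t² − r² ≤ s1²}`. -/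
def slab (s0 s1 : ℝ) : Set Pt :=
  {p | rad p < p 0 - 1 ∧ s0^2 ≤ (p 0)^2 - (rad p)^2 ∧ (p 0)^2 - (rad p)^2 ≤ s1^2}

/-- The parametrization `x ↦ (√(s² + |x|²), x)` of the hyperboloid `H_s`. -/
def hyp (s : ℝ) (x : Fin 2 → ℝ) : Pt :=
  ![Real.sqrt (s^2 + (x 0)^2 + (x 1)^2), x 0, x 1]

/-- The flat `L²` norm on the hyperboloid `H_s`. -/
def L2f (s : ℝ) (g : Pt → ℝ) : ℝ :=
  Real.sqrt (∫ x : Fin 2 → ℝ, (g (hyp s x))^2)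

/-- `φ` vanishes near the conical boundary `∂K_{[s0,s1]}` (i.e. on a neighbourhood of
`r = t − 1` within the slab, in particular outside the cone on the slab). -/
def VanishNearBdry (s0 s1 : ℝ) (φ : Pt → ℝ) : Prop :=
  ∃ ε > (0:ℝ), ∀ p : Pt, 0 < p 0 → s0^2 ≤ (p 0)^2 - (rad p)^2 →
    (p 0)^2 - (rad p)^2 ≤ s1^2 → p 0 - 1 - ε < rad p → φ p = 0

/-- The hyperboloidal energy functional `E_m(s, φ)`. -/
def energyE (m s : ℝ) (φ : Pt → ℝ) : ℝ :=
  ∫ x : Fin 2 → ℝ,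
    ((pd 0 φ (hyp s x))^2 + (pd 1 φ (hyp s x))^2 + (pd 2 φ (hyp s x))^2
      + 2 * (hyp s x 1 / hyp s x 0) * pd 0 φ (hyp s x) * pd 1 φ (hyp s x)
      + 2 * (hyp s x 2 / hyp s x 0) * pd 0 φ (hyp s x) * pd 2 φ (hyp s x)
      + m^2 * (φ (hyp s x))^2)

/-- The weighted inverted time translation `Kφ = (t + r²/t) ∂_t φ + 2 x^a ∂_a φ`. -/
def Kvf (φ : Pt → ℝ) (p : Pt) : ℝ :=
  (p 0 + (rad p)^2 / p 0) * pd 0 φ p + 2 * (p 1 * pd 1 φ p + p 2 * pd 2 φ p)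

/-- The conformal energy `E_con(s, φ)`. -/
def Econ (s : ℝ) (φ : Pt → ℝ) : ℝ :=
  ∫ x : Fin 2 → ℝ,
    ((s * ubd 0 φ (hyp s x))^2 + (s * ubd 1 φ (hyp s x))^2
      + (Kvf φ (hyp s x) + φ (hyp s x))^2)


open scoped ContDiff

section PartialDerivative

variable {φ ψ : Pt → ℝ} {p : Pt}

lemma contDiff_pd (h : ContDiff ℝ ∞ φ) (i : Fin 3) : ContDiff ℝ ∞ (pd i φ) :=
  (h.fderiv_right le_rfl).clm_apply contDiff_const

lemma differentiableAt_pd (h : ContDiffAt ℝ 2 φ p) (i : Fin 3) :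
    DifferentiableAt ℝ (pd i φ) p :=
  ((h.fderiv_right (m := 1) le_rfl).differentiableAt one_ne_zero).clm_apply
    (differentiableAt_const _)

lemma pd_add (hφ : DifferentiableAt ℝ φ p) (hψ : DifferentiableAt ℝ ψ p) (i : Fin 3) :
    pd i (φ + ψ) p = pd i φ p + pd i ψ p := by
  simp [pd, fderiv_add hφ hψ]

lemma pd_smul (c : ℝ) (i : Fin 3) : pd i (c • φ) = c • pd i φ := by
  ext p
  simp [pd, fderiv_const_smul_field]

lemma pd_coord_mul (hφ : DifferentiableAt ℝ φ p) (i j : Fin 3) :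
    pd i (fun q => q j * φ q) p = (if i = j then φ p else 0) + p j * pd i φ p := by
  have hcoord : HasFDerivAt (fun q : Pt => q j) (ContinuousLinearMap.proj j : Pt →L[ℝ] ℝ) p :=
    (ContinuousLinearMap.proj (R := ℝ) (φ := fun _ : Fin 3 => ℝ) j).hasFDerivAt
  simp [pd, fderiv_fun_mul hcoord.differentiableAt hφ, hcoord.fderiv, Pi.single_apply, eq_comm,
    add_comm]

lemma pd_comm (h : ContDiffAt ℝ 2 φ p) (i j : Fin 3) : pd i (pd j φ) p = pd j (pd i φ) p := by
  have hd : DifferentiableAt ℝ (fderiv ℝ φ) p :=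
    (h.fderiv_right (m := 1) le_rfl).differentiableAt one_ne_zero
  have hsymm : IsSymmSndFDerivAt ℝ φ p :=
    h.isSymmSndFDerivAt (by simp [minSmoothness_of_isRCLikeNormedField])
  have hsecond (v w : Fin 3) :
      pd v (pd w φ) p = fderiv ℝ (fderiv ℝ φ) p (Pi.single v 1) (Pi.single w 1) := by
    change fderiv ℝ (fun q => fderiv ℝ φ q (Pi.single w 1)) p (Pi.single v 1) = _
    simp [fderiv_clm_apply hd (differentiableAt_const _)]
  rw [hsecond, hsecond, hsymm.eq]

lemma ContDiff.contDiffAt_two (h : ContDiff ℝ ∞ φ) (p : Pt) : ContDiffAt ℝ 2 φ p :=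
  (h.of_le (WithTop.coe_le_coe.2 le_top)).contDiffAt

end PartialDerivative

section Boost

variable {φ ψ : Pt → ℝ}

lemma contDiff_boost (h : ContDiff ℝ ∞ φ) (a : Fin 2) : ContDiff ℝ ∞ (boost a φ) :=
  ((contDiff_apply ℝ ℝ a.succ).mul (contDiff_pd h 0)).add
    ((contDiff_apply ℝ ℝ 0).mul (contDiff_pd h a.succ))

lemma boost_add (hφ : Differentiable ℝ φ) (hψ : Differentiable ℝ ψ) (a : Fin 2) :
    boost a (φ + ψ) = boost a φ + boost a ψ := by
  ext p
  simp only [boost, pd_add (hφ p) (hψ p), Pi.add_apply]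
  ring

lemma boost_smul (c : ℝ) (a : Fin 2) : boost a (c • φ) = c • boost a φ := by
  ext p
  simp only [boost, pd_smul, Pi.smul_apply, smul_eq_mul]
  ring

lemma boost_pd {p : Pt} (h : ContDiffAt ℝ 2 φ p) (a : Fin 2) (α : Fin 3) :
    boost a (pd α φ) p = pd α (boost a φ) p - (if α = a.succ then pd 0 φ p else 0)
      - (if α = 0 then pd a.succ φ p else 0) := by
  have hsplit : boost a φ = (fun q => q a.succ * pd 0 φ q) + (fun q => q 0 * pd a.succ φ q) := rfl
  have h0 := differentiableAt_pd h 0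
  have ha := differentiableAt_pd h a.succ
  rw [hsplit, pd_add ((differentiableAt_apply a.succ p).fun_mul h0)
    ((differentiableAt_apply 0 p).fun_mul ha), pd_coord_mul h0, pd_coord_mul ha, boost,
    pd_comm h α 0, pd_comm h α a.succ]
  ring

end Boost

section Iterated

variable {φ ψ : Pt → ℝ}

lemma contDiff_boostSeq (h : ContDiff ℝ ∞ φ) : ∀ J : List (Fin 2), ContDiff ℝ ∞ (boostSeq J φ)
  | [] => h
  | a :: J => contDiff_boost (contDiff_boostSeq h J) a

lemma contDiff_pdSeq (h : ContDiff ℝ ∞ φ) : ∀ I : List (Fin 3), ContDiff ℝ ∞ (pdSeq I φ)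
  | [] => h
  | i :: I => contDiff_pd (contDiff_pdSeq h I) i

lemma pdSeq_add (hφ : ContDiff ℝ ∞ φ) (hψ : ContDiff ℝ ∞ ψ) :
    ∀ I : List (Fin 3), pdSeq I (φ + ψ) = pdSeq I φ + pdSeq I ψ
  | [] => rfl
  | i :: I => by
    ext p
    rw [pdSeq, pdSeq_add hφ hψ I, pd_add ((contDiff_pdSeq hφ I).differentiable (by simp) p)
      ((contDiff_pdSeq hψ I).differentiable (by simp) p)]
    rfl

lemma pdSeq_smul (c : ℝ) : ∀ I : List (Fin 3), pdSeq I (c • φ) = c • pdSeq I φ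
  | [] => rfl
  | i :: I => by rw [pdSeq, pdSeq_smul c I, pd_smul]; rfl

lemma pdSeq_pd (h : ContDiff ℝ ∞ φ) (α : Fin 3) :
    ∀ I : List (Fin 3), pdSeq I (pd α φ) = pd α (pdSeq I φ)
  | [] => rfl
  | i :: I => by
    ext p
    rw [pdSeq, pdSeq_pd h α I]
    exact pd_comm ((contDiff_pdSeq h I).contDiffAt_two p) i α

end Iterated

def derivBoost (J : List (Fin 2)) (β : Fin 3) : (Pt → ℝ) → Pt → ℝ :=
  fun φ => pd β (boostSeq J φ)

/-- Spans of operators rather than of functions, so that the coefficients cannot depend on `φ`. -/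
def lowerOrderOps (m : ℕ) : Submodule ℝ ((Pt → ℝ) → Pt → ℝ) :=
  Submodule.span ℝ {R | ∃ J β, J.length < m ∧ R = derivBoost J β}

lemma derivBoost_mem_lowerOrderOps {J : List (Fin 2)} {m : ℕ} (hJ : J.length < m) (β : Fin 3) :
    derivBoost J β ∈ lowerOrderOps m :=
  Submodule.subset_span ⟨J, β, hJ, rfl⟩

lemma lowerOrderOps_mono {m m' : ℕ} (h : m ≤ m') : lowerOrderOps m ≤ lowerOrderOps m' :=
  Submodule.span_mono fun _ ⟨J, β, hJ, hR⟩ => ⟨J, β, hJ.trans_le h, hR⟩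

section LowerOrderOps

variable {m : ℕ} {R : (Pt → ℝ) → Pt → ℝ} {φ : Pt → ℝ}

lemma contDiff_of_mem_lowerOrderOps (hR : R ∈ lowerOrderOps m) (hφ : ContDiff ℝ ∞ φ) :
    ContDiff ℝ ∞ (R φ) := by
  induction hR using Submodule.span_induction with
  | mem R hR =>
    obtain ⟨J, β, -, rfl⟩ := hR
    exact contDiff_pd (contDiff_boostSeq hφ J) β
  | zero => exact contDiff_const
  | add R R' _ _ h h' => exact h.add h'
  | smul c R _ h => exact h.const_smul c

lemma exists_boost_derivBoost (a : Fin 2) (J : List (Fin 2)) (β : Fin 3) :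
    ∃ E ∈ lowerOrderOps (J.length + 1), ∀ φ, ContDiff ℝ ∞ φ →
      boost a (derivBoost J β φ) = derivBoost (a :: J) β φ + E φ := by
  refine ⟨-((if β = a.succ then 1 else 0 : ℝ) • derivBoost J 0)
    - (if β = 0 then 1 else 0 : ℝ) • derivBoost J a.succ, ?_, fun φ hφ => ?_⟩
  · exact sub_mem (neg_mem (Submodule.smul_mem _ _ (derivBoost_mem_lowerOrderOps (by simp) 0)))
      (Submodule.smul_mem _ _ (derivBoost_mem_lowerOrderOps (by simp) a.succ))
  · ext p
    simp only [derivBoost, boost_pd ((contDiff_boostSeq hφ J).contDiffAt_two p), boostSeq,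
      Pi.add_apply, Pi.sub_apply, Pi.neg_apply, Pi.smul_apply, smul_eq_mul]
    split_ifs <;> ring

lemma exists_boost_comp_mem_lowerOrderOps (hR : R ∈ lowerOrderOps m) (a : Fin 2) :
    ∃ R' ∈ lowerOrderOps (m + 1), ∀ φ, ContDiff ℝ ∞ φ → boost a (R φ) = R' φ := by
  induction hR using Submodule.span_induction with
  | mem R hR =>
    obtain ⟨J, β, hJ, rfl⟩ := hR
    obtain ⟨E, hE, hboost⟩ := exists_boost_derivBoost a J β
    exact ⟨derivBoost (a :: J) β + E,
      add_mem (derivBoost_mem_lowerOrderOps (by simpa using hJ) β)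
        (lowerOrderOps_mono (by omega) hE), hboost⟩
  | zero => exact ⟨0, zero_mem _, fun φ _ => by ext; simp [boost, pd]⟩
  | add R₁ R₂ h₁ h₂ ih₁ ih₂ =>
    obtain ⟨R₁', h₁', e₁⟩ := ih₁
    obtain ⟨R₂', h₂', e₂⟩ := ih₂
    refine ⟨R₁' + R₂', add_mem h₁' h₂', fun φ hφ => ?_⟩
    rw [Pi.add_apply, boost_add ((contDiff_of_mem_lowerOrderOps h₁ hφ).differentiable (by simp))
      ((contDiff_of_mem_lowerOrderOps h₂ hφ).differentiable (by simp)), e₁ φ hφ, e₂ φ hφ]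
    rfl
  | smul c R _ ih =>
    obtain ⟨R', h', e⟩ := ih
    exact ⟨c • R', Submodule.smul_mem _ c h', fun φ hφ => by
      rw [Pi.smul_apply, boost_smul, e φ hφ]; rfl⟩

end LowerOrderOps

lemma exists_boostSeq_pd_eq (α : Fin 3) : ∀ J : List (Fin 2),
    ∃ R ∈ lowerOrderOps J.length, ∀ φ, ContDiff ℝ ∞ φ →
      boostSeq J (pd α φ) = pd α (boostSeq J φ) + R φ
  | [] => ⟨0, zero_mem _, fun φ _ => by simp [boostSeq]⟩
  | a :: J => by
    obtain ⟨R, hR, hJ⟩ := exists_boostSeq_pd_eq α J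
    obtain ⟨R', hR', hboost⟩ := exists_boost_comp_mem_lowerOrderOps hR a
    obtain ⟨E, hE, hcomm⟩ := exists_boost_derivBoost a J α
    refine ⟨E + R', add_mem hE hR', fun φ hφ => ?_⟩
    have hΨ := contDiff_boostSeq hφ J
    have hstep : boost a (pd α (boostSeq J φ)) = pd α (boostSeq (a :: J) φ) + E φ := hcomm φ hφ
    rw [boostSeq, hJ φ hφ, boost_add ((contDiff_pd hΨ α).differentiable (by simp))
      ((contDiff_of_mem_lowerOrderOps hR hφ).differentiable (by simp)), hboost φ hφ, hstep,
      add_assoc]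
    rfl

def lowerOrderSum (m : ℕ) (I : List (Fin 3)) (φ : Pt → ℝ) (p : Pt) : ℝ :=
  ∑ j ∈ Finset.range m, ∑ J' : Fin j → Fin 2, ∑ β : Fin 3,
    |pd β (pdSeq I (boostSeq (List.ofFn J') φ)) p|

section LowerOrderSum

variable {m : ℕ} {I : List (Fin 3)} {φ : Pt → ℝ} {p : Pt}

lemma lowerOrderSum_nonneg : 0 ≤ lowerOrderSum m I φ p := by
  unfold lowerOrderSum
  positivity

lemma abs_pd_pdSeq_le_lowerOrderSum {J : List (Fin 2)} (hJ : J.length < m) (β : Fin 3) :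
    |pd β (pdSeq I (boostSeq J φ)) p| ≤ lowerOrderSum m I φ p := by
  set S : List (Fin 2) → ℝ := fun J => ∑ β : Fin 3, |pd β (pdSeq I (boostSeq J φ)) p|
  calc |pd β (pdSeq I (boostSeq J φ)) p|
      ≤ S J := Finset.single_le_sum (f := fun β => |pd β (pdSeq I (boostSeq J φ)) p|)
          (fun _ _ => abs_nonneg _) (Finset.mem_univ β)
    _ = S (List.ofFn J.get) := by rw [List.ofFn_get]
    _ ≤ ∑ J' : Fin J.length → Fin 2, S (List.ofFn J') :=
        Finset.single_le_sum (f := fun J' => S (List.ofFn J')) (fun _ _ => by positivity)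
          (Finset.mem_univ J.get)
    _ ≤ lowerOrderSum m I φ p :=
        Finset.single_le_sum (f := fun j => ∑ J' : Fin j → Fin 2, S (List.ofFn J'))
          (fun _ _ => by positivity) (Finset.mem_range.2 hJ)

lemma exists_abs_pdSeq_le_of_mem_lowerOrderOps {R : (Pt → ℝ) → Pt → ℝ}
    (hR : R ∈ lowerOrderOps m) :
    ∃ C : ℝ, ∀ I φ, ContDiff ℝ ∞ φ → ∀ p, |pdSeq I (R φ) p| ≤ C * lowerOrderSum m I φ p := by
  induction hR using Submodule.span_induction with
  | mem R hR =>
    obtain ⟨J, β, hJ, rfl⟩ := hR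
    refine ⟨1, fun I φ hφ p => ?_⟩
    rw [one_mul, derivBoost, pdSeq_pd (contDiff_boostSeq hφ J)]
    exact abs_pd_pdSeq_le_lowerOrderSum hJ β
  | zero => exact ⟨0, fun I φ _ p => by simpa using congrFun (pdSeq_smul (φ := 0) 0 I) p⟩
  | add R₁ R₂ h₁ h₂ ih₁ ih₂ =>
    obtain ⟨C₁, e₁⟩ := ih₁
    obtain ⟨C₂, e₂⟩ := ih₂
    refine ⟨C₁ + C₂, fun I φ hφ p => ?_⟩
    rw [Pi.add_apply, pdSeq_add (contDiff_of_mem_lowerOrderOps h₁ hφ)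
      (contDiff_of_mem_lowerOrderOps h₂ hφ), Pi.add_apply, add_mul]
    exact (abs_add_le _ _).trans (add_le_add (e₁ I φ hφ p) (e₂ I φ hφ p))
  | smul c R _ ih =>
    obtain ⟨C, e⟩ := ih
    refine ⟨|c| * C, fun I φ hφ p => ?_⟩
    rw [Pi.smul_apply, pdSeq_smul, Pi.smul_apply, smul_eq_mul, abs_mul, mul_assoc]
    exact mul_le_mul_of_nonneg_left (e I φ hφ p) (abs_nonneg c)

end LowerOrderSum

lemma exists_abs_commutator_le (J : List (Fin 2)) (α : Fin 3) :
    ∃ C : ℝ, ∀ I φ, ContDiff ℝ ∞ φ → ∀ p,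
      |pdSeq I (boostSeq J (pd α φ)) p - pd α (pdSeq I (boostSeq J φ)) p|
        ≤ C * lowerOrderSum J.length I φ p := by
  obtain ⟨R, hR, hcomm⟩ := exists_boostSeq_pd_eq α J
  obtain ⟨C, hC⟩ := exists_abs_pdSeq_le_of_mem_lowerOrderOps hR
  refine ⟨C, fun I φ hφ p => ?_⟩
  have hΨ := contDiff_boostSeq hφ J
  rw [hcomm φ hφ, pdSeq_add (contDiff_pd hΨ α) (contDiff_of_mem_lowerOrderOps hR hφ),
    pdSeq_pd hΨ, Pi.add_apply, add_sub_cancel_left]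
  exact hC I φ hφ p

/-- **Commutator estimate** (Lemma 4.4, estimate (4.10a)). For sequences `I` (indices in
`{0,1,2}`) and `J` (indices in `{1,2}`), there is `C = C(|I|,|J|) > 0` such that for smooth
`φ` supported in the cone `K`, any `α` and any point of `K`:
`|[∂^I L^J, ∂_α]φ| ≤ C Σ_{|J'|<|J|} Σ_β |∂_β ∂^I L^{J'} φ|`. -/
theorem commutator_estimate (n m : ℕ) :
    ∃ C : ℝ, 0 < C ∧
      ∀ (I : List (Fin 3)) (J : List (Fin 2)), I.length = n → J.length = m →
      ∀ φ : Pt → ℝ, ContDiff ℝ (⊤ : ℕ∞) φ → (∀ p, p ∉ coneK → φ p = 0) →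
      ∀ (α : Fin 3), ∀ p ∈ coneK,
        |pdSeq I (boostSeq J (pd α φ)) p - pd α (pdSeq I (boostSeq J φ)) p|
          ≤ C * ∑ j ∈ Finset.range m, ∑ J' : Fin j → Fin 2, ∑ β : Fin 3,
              |pd β (pdSeq I (boostSeq (List.ofFn J') φ)) p| := by
  choose C hC using fun x : List (Fin 2) × Fin 3 => exists_abs_commutator_le x.1 x.2
  obtain ⟨M, hM⟩ :=
    (((List.finite_length_eq (Fin 2) m).prod Set.finite_univ).image C).bddAbove
  refine ⟨max M 1, by positivity, fun I J _ hJ φ hφ _ α p _ => ?_⟩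
  have hCM : C (J, α) ≤ max M 1 := (hM ⟨(J, α), ⟨hJ, trivial⟩, rfl⟩).trans (le_max_left _ _)
  calc _ ≤ C (J, α) * lowerOrderSum m I φ p := hJ ▸ hC (J, α) I φ hφ p
    _ ≤ max M 1 * lowerOrderSum m I φ p := mul_le_mul_of_nonneg_right hCM lowerOrderSum_nonneg
end
end

section
/- Derivatives of s/t in the cone. For any finite sequences I (indices in {0,1,2}) and J (indices in {1,2}) there exists a constant C > 0, determined by I and J, such that at every point of the cone K: |∂^I L^J (s/t)| ≤ C (s/t) if |I| = 0, and |∂^I L^J (s/t)| ≤ C s^{−1} if |I| > 0, where s/t denotes the function (t,x) ↦ √(t² − |x|²)/t on K. -/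
noncomputable section

open MeasureTheory

/-- The function `s/t = √(t² − |x|²)/t`. -/
def sot (p : Pt) : ℝ := Real.sqrt ((p 0)^2 - (rad p)^2) / p 0

/-!
On the cone, `∂^I L^J (s/t)` is a finite sum of monomials `k (x¹)^a (x²)^b t^c s^e` that are
homogeneous of degree `-|I|` and have `e ≥ 1 - 2|I|`: this holds for `s/t = t⁻¹ s`, a coordinate
derivative lowers the degree by one and, as `∂s = (t, -x)/s`, the exponent of `s` by at most two,
while a boost keeps both because `L_a s = 0`. As `|x^a| ≤ t` and `1 ≤ s ≤ t ≤ s²` in `K`, such a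
monomial of degree `-n` is bounded by `|k| t^(-n-e) s^e`, which is at most `|k| s/t` if `n = 0`
(then `e ≥ 1`) and at most `|k|/s` if `n ≥ 1`.
-/

section LinearOrderedField

variable {K : Type*} [Field K] [LinearOrder K] [IsStrictOrderedRing K]

lemma zpow_neg_mul_zpow_le_div {s t : K} (hs : 0 < s) (hst : s ≤ t) {e : ℤ} (he : 1 ≤ e) :
    t ^ (-e) * s ^ e ≤ s / t := by
  have ht : 0 < t := hs.trans_le hst
  calc t ^ (-e) * s ^ e = (s / t) ^ e := by rw [div_zpow, zpow_neg, div_eq_mul_inv, mul_comm]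
    _ ≤ (s / t) ^ (1 : ℤ) :=
      zpow_le_zpow_right_of_le_one₀ (div_pos hs ht) ((div_le_one ht).2 hst) he
    _ = s / t := zpow_one _

lemma zpow_neg_sub_mul_zpow_le_inv {s t : K} (hs : 1 ≤ s) (hst : s ≤ t) (hts : t ≤ s ^ 2)
    {n e : ℤ} (hn : 1 ≤ n) (he : 1 - 2 * n ≤ e) :
    t ^ (-n - e) * s ^ e ≤ s⁻¹ := by
  have hs0 : 0 < s := one_pos.trans_le hs
  rw [← zpow_neg_one]
  rcases le_total (-n - e) 0 with hj | hj
  · have : t ^ (-n - e) ≤ s ^ (-n - e) := by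
      rw [← neg_neg (-n - e), zpow_neg, zpow_neg s]
      exact inv_anti₀ (zpow_pos hs0 _) (zpow_le_zpow_left₀ (by omega) hs0.le hst)
    calc t ^ (-n - e) * s ^ e ≤ s ^ (-n - e) * s ^ e := by gcongr
      _ = s ^ (-n) := by rw [← zpow_add₀ hs0.ne']; ring_nf
      _ ≤ s ^ (-1 : ℤ) := zpow_le_zpow_right₀ hs (by omega)
  · calc t ^ (-n - e) * s ^ e ≤ (s ^ (2 : ℤ)) ^ (-n - e) * s ^ e := by
          gcongr
          exact zpow_le_zpow_left₀ hj (hs0.trans_le hst).le (by exact_mod_cast hts)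
      _ = s ^ (-2 * n - e) := by rw [← zpow_mul, ← zpow_add₀ hs0.ne']; ring_nf
      _ ≤ s ^ (-1 : ℤ) := zpow_le_zpow_right₀ hs (by omega)

end LinearOrderedField

def hyperbolicTime (p : Pt) : ℝ := Real.sqrt ((p 0)^2 - (rad p)^2)

lemma sot_eq_hyperbolicTime_div (p : Pt) : sot p = hyperbolicTime p / p 0 := rfl

lemma rad_nonneg (p : Pt) : 0 ≤ rad p := Real.sqrt_nonneg _

lemma rad_sq (p : Pt) : rad p ^ 2 = p 1 ^ 2 + p 2 ^ 2 := Real.sq_sqrt (by positivity)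

lemma abs_apply_succ_le_rad (p : Pt) (a : Fin 2) : |p a.succ| ≤ rad p := by
  rw [← Real.sqrt_sq_eq_abs]
  apply Real.sqrt_le_sqrt
  fin_cases a <;> simp [sq_nonneg]

lemma hyperbolicTime_eq :
    hyperbolicTime = fun q => Real.sqrt (q 0 ^ 2 - q 1 ^ 2 - q 2 ^ 2) := by
  ext q
  rw [hyperbolicTime, rad_sq, sub_add_eq_sub_sub]

lemma isOpen_coneK : IsOpen coneK :=
  isOpen_lt (Real.continuous_sqrt.comp (by fun_prop)) (by fun_prop)

section coneK

variable {p : Pt}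

lemma one_lt_of_mem_coneK (hp : p ∈ coneK) : 1 < p 0 := by
  have : rad p < p 0 - 1 := hp
  linarith [rad_nonneg p]

lemma lt_sq_sub_rad_sq_of_mem_coneK (hp : p ∈ coneK) : p 0 < p 0 ^ 2 - rad p ^ 2 := by
  have : rad p < p 0 - 1 := hp
  nlinarith [rad_nonneg p]

lemma abs_apply_succ_le_of_mem_coneK (hp : p ∈ coneK) (a : Fin 2) : |p a.succ| ≤ p 0 := by
  have : rad p < p 0 - 1 := hp
  linarith [abs_apply_succ_le_rad p a]

lemma hyperbolicTime_sq_of_mem_coneK (hp : p ∈ coneK) :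
    hyperbolicTime p ^ 2 = p 0 ^ 2 - rad p ^ 2 :=
  Real.sq_sqrt (by linarith [one_lt_of_mem_coneK hp, lt_sq_sub_rad_sq_of_mem_coneK hp])

lemma hyperbolicTime_pos_of_mem_coneK (hp : p ∈ coneK) : 0 < hyperbolicTime p :=
  Real.sqrt_pos.2 (by linarith [one_lt_of_mem_coneK hp, lt_sq_sub_rad_sq_of_mem_coneK hp])

lemma le_hyperbolicTime_sq_of_mem_coneK (hp : p ∈ coneK) : p 0 ≤ hyperbolicTime p ^ 2 := by
  rw [hyperbolicTime_sq_of_mem_coneK hp]; exact (lt_sq_sub_rad_sq_of_mem_coneK hp).le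

lemma one_le_hyperbolicTime_of_mem_coneK (hp : p ∈ coneK) : 1 ≤ hyperbolicTime p := by
  nlinarith [le_hyperbolicTime_sq_of_mem_coneK hp, one_lt_of_mem_coneK hp,
    hyperbolicTime_pos_of_mem_coneK hp]

lemma hyperbolicTime_le_of_mem_coneK (hp : p ∈ coneK) : hyperbolicTime p ≤ p 0 := by
  nlinarith [hyperbolicTime_sq_of_mem_coneK hp, one_lt_of_mem_coneK hp,
    hyperbolicTime_pos_of_mem_coneK hp, sq_nonneg (rad p)]

end coneK

lemma hasFDerivAt_hyperbolicTime {p : Pt} (hp : p ∈ coneK) :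
    HasFDerivAt hyperbolicTime ((hyperbolicTime p)⁻¹ •
      (p 0 • .proj 0 - p 1 • .proj 1 - p 2 • .proj 2 : Pt →L[ℝ] ℝ)) p := by
  have hs : √(p 0 ^ 2 - p 1 ^ 2 - p 2 ^ 2) = hyperbolicTime p := by rw [hyperbolicTime_eq]
  have hq : 0 < p 0 ^ 2 - p 1 ^ 2 - p 2 ^ 2 := by
    rw [← Real.sqrt_pos, hs]; exact hyperbolicTime_pos_of_mem_coneK hp
  have hx (j : Fin 3) := hasFDerivAt_apply (𝕜 := ℝ) j p
  rw [hyperbolicTime_eq]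
  refine (((((hx 0).pow 2).sub ((hx 1).pow 2)).sub ((hx 2).pow 2)).sqrt hq.ne').congr_fderiv ?_
  ext v
  simp only [Pi.sub_apply, one_div, mul_inv_rev, Nat.add_one_sub_one, pow_one, nsmul_eq_mul,
    Nat.cast_ofNat, smul_apply, sub_apply, ContinuousLinearMap.proj_apply, smul_eq_mul]
  ring

structure Monomial where
  coeff : ℝ
  a : ℕ
  b : ℕ
  c : ℤ
  e : ℤ

namespace Monomial

def eval (m : Monomial) (p : Pt) : ℝ :=
  m.coeff * p 1 ^ m.a * p 2 ^ m.b * p 0 ^ m.c * hyperbolicTime p ^ m.e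

def evalSum (L : List Monomial) (p : Pt) : ℝ := (L.map (·.eval p)).sum

def derivTerms (m : Monomial) : Fin 3 → List Monomial
  | 0 => [⟨m.coeff * m.c, m.a, m.b, m.c - 1, m.e⟩, ⟨m.coeff * m.e, m.a, m.b, m.c + 1, m.e - 2⟩]
  | 1 => [⟨m.coeff * m.a, m.a - 1, m.b, m.c, m.e⟩, ⟨-(m.coeff * m.e), m.a + 1, m.b, m.c, m.e - 2⟩]
  | 2 => [⟨m.coeff * m.b, m.a, m.b - 1, m.c, m.e⟩, ⟨-(m.coeff * m.e), m.a, m.b + 1, m.c, m.e - 2⟩]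

/-- `L_a` applied to `m.eval`: the terms coming from `s` cancel since `L_a s = 0`, so the
exponent of `s` is unchanged. -/
def boostTerms (m : Monomial) : Fin 2 → List Monomial
  | 0 => [⟨m.coeff * m.c, m.a + 1, m.b, m.c - 1, m.e⟩, ⟨m.coeff * m.a, m.a - 1, m.b, m.c + 1, m.e⟩]
  | 1 => [⟨m.coeff * m.c, m.a, m.b + 1, m.c - 1, m.e⟩, ⟨m.coeff * m.b, m.a, m.b - 1, m.c + 1, m.e⟩]

/-- Terms with coefficient `0` are exempt: `derivTerms` and `boostTerms` produce such terms
with the junk exponent `a - 1 = 0` when `a = 0`. -/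
def IsAdmissible (n : ℕ) (m : Monomial) : Prop :=
  m.coeff ≠ 0 → (m.a : ℤ) + m.b + m.c + m.e = -n ∧ 1 - 2 * (n : ℤ) ≤ m.e

@[simp]
lemma evalSum_nil (p : Pt) : evalSum [] p = 0 := rfl

@[simp]
lemma evalSum_cons (m : Monomial) (L : List Monomial) (p : Pt) :
    evalSum (m :: L) p = m.eval p + evalSum L p := List.sum_cons

@[simp]
lemma evalSum_append (L L' : List Monomial) (p : Pt) :
    evalSum (L ++ L') p = evalSum L p + evalSum L' p := by
  simp [evalSum]

lemma hasFDerivAt_eval (m : Monomial) {p : Pt} (hp : p ∈ coneK) :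
    ∃ D : Pt →L[ℝ] ℝ, HasFDerivAt m.eval D p ∧
      ∀ i, D (Pi.single i 1) = evalSum (m.derivTerms i) p := by
  have ht : p 0 ≠ 0 := (one_pos.trans (one_lt_of_mem_coneK hp)).ne'
  have hs : hyperbolicTime p ≠ 0 := (hyperbolicTime_pos_of_mem_coneK hp).ne'
  have hx (j : Fin 3) := hasFDerivAt_apply (𝕜 := ℝ) j p
  have H := (((((hasFDerivAt_const m.coeff p).mul ((hx 1).pow m.a)).mul
    ((hx 2).pow m.b)).mul ((hasDerivAt_zpow m.c _ (.inl ht)).comp_hasFDerivAt p (hx 0))).mul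
    ((hasDerivAt_zpow m.e _ (.inl hs)).comp_hasFDerivAt p (hasFDerivAt_hyperbolicTime hp)))
  refine ⟨_, H, fun i => ?_⟩
  fin_cases i <;>
    simp only [Fin.zero_eta, Fin.mk_one, Fin.reduceFinMk, Fin.isValue, Fin.reduceEq, derivTerms,
      evalSum_cons, evalSum_nil, eval, Pi.mul_apply, Function.comp_apply, add_apply, sub_apply,
      smul_apply, ContinuousLinearMap.proj_apply, Pi.single_eq_same, ne_eq, one_ne_zero,
      zero_ne_one, not_false_eq_true, Pi.single_eq_of_ne, smul_eq_mul, nsmul_eq_mul, smul_zero,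
      smul_add, mul_zero, mul_one, add_zero, zero_add, sub_zero, zero_sub, sub_self, mul_neg,
      neg_mul, zpow_sub₀ ht, zpow_sub₀ hs, zpow_add₀ ht, zpow_ofNat, pow_succ, pow_zero,
      one_mul] <;>
    field_simp <;> ring

lemma hasFDerivAt_evalSum (L : List Monomial) {p : Pt} (hp : p ∈ coneK) :
    ∃ D : Pt →L[ℝ] ℝ, HasFDerivAt (evalSum L) D p ∧
      ∀ i, D (Pi.single i 1) = evalSum (L.flatMap (·.derivTerms i)) p := by
  induction L with
  | nil => exact ⟨0, hasFDerivAt_const 0 p, by simp⟩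
  | cons m L ih =>
    obtain ⟨D, hD, hDi⟩ := m.hasFDerivAt_eval hp
    obtain ⟨D', hD', hDi'⟩ := ih
    refine ⟨D + D', ?_, fun i => by simp [hDi, hDi']⟩
    rw [show evalSum (m :: L) = fun q => m.eval q + evalSum L q from funext (evalSum_cons m L)]
    exact hD.add hD'

lemma pd_eq_evalSum_flatMap {f : Pt → ℝ} {L : List Monomial} (hf : Set.EqOn f (evalSum L) coneK)
    {p : Pt} (hp : p ∈ coneK) (i : Fin 3) :
    pd i f p = evalSum (L.flatMap (·.derivTerms i)) p := by
  obtain ⟨D, hD, hDi⟩ := hasFDerivAt_evalSum L hp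
  rw [pd, (Filter.eventuallyEq_of_mem (isOpen_coneK.mem_nhds hp) hf).fderiv_eq, hD.fderiv, hDi]

lemma boost_evalSum_derivTerms (m : Monomial) (a : Fin 2) {p : Pt} (hp : p ∈ coneK) :
    p a.succ * evalSum (m.derivTerms 0) p + p 0 * evalSum (m.derivTerms a.succ) p
      = evalSum (m.boostTerms a) p := by
  have ht : p 0 ≠ 0 := (one_pos.trans (one_lt_of_mem_coneK hp)).ne'
  fin_cases a <;>
    simp only [Fin.zero_eta, Fin.mk_one, Fin.succ_zero_eq_one, Fin.succ_one_eq_two, derivTerms,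
      boostTerms, evalSum_cons, evalSum_nil, eval, zpow_sub₀ ht, zpow_add₀ ht, pow_succ] <;>
    field_simp <;> ring

lemma boost_evalSum_flatMap_derivTerms (L : List Monomial) (a : Fin 2) {p : Pt} (hp : p ∈ coneK) :
    p a.succ * evalSum (L.flatMap (·.derivTerms 0)) p
        + p 0 * evalSum (L.flatMap (·.derivTerms a.succ)) p
      = evalSum (L.flatMap (·.boostTerms a)) p := by
  induction L with
  | nil => simp
  | cons m L ih =>
    simp only [List.flatMap_cons, evalSum_append, ← ih, ← m.boost_evalSum_derivTerms a hp]
    ring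

variable {n : ℕ} {m : Monomial}

lemma IsAdmissible.derivTerms (hm : m.IsAdmissible n) (i : Fin 3) :
    ∀ m' ∈ m.derivTerms i, m'.IsAdmissible (n + 1) := by
  intro m' hm' hk
  fin_cases i <;>
    simp only [Monomial.derivTerms, List.mem_cons, List.not_mem_nil, or_false] at hm' <;>
    rcases hm' with rfl | rfl <;>
    simp only [ne_eq, neg_eq_zero, mul_eq_zero, not_or, Int.cast_eq_zero,
      Nat.cast_eq_zero] at hk ⊢ <;>
    have := hm hk.1 <;> omega

lemma IsAdmissible.boostTerms (hm : m.IsAdmissible n) (a : Fin 2) :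
    ∀ m' ∈ m.boostTerms a, m'.IsAdmissible n := by
  intro m' hm' hk
  fin_cases a <;>
    simp only [Monomial.boostTerms, List.mem_cons, List.not_mem_nil, or_false] at hm' <;>
    rcases hm' with rfl | rfl <;>
    simp only [ne_eq, mul_eq_zero, not_or, Int.cast_eq_zero, Nat.cast_eq_zero] at hk ⊢ <;>
    have := hm hk.1 <;> omega

lemma IsAdmissible.abs_eval_le (hm : m.IsAdmissible n) (hk : m.coeff ≠ 0) {p : Pt}
    (hp : p ∈ coneK) :
    |m.eval p| ≤ |m.coeff| * (p 0 ^ (-(n : ℤ) - m.e) * hyperbolicTime p ^ m.e) := by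
  obtain ⟨hdeg, -⟩ := hm hk
  have ht : 0 < p 0 := one_pos.trans (one_lt_of_mem_coneK hp)
  have hs := hyperbolicTime_pos_of_mem_coneK hp
  have hx (a : Fin 2) := abs_apply_succ_le_of_mem_coneK hp a
  calc |m.eval p| = |m.coeff| * |p 1| ^ m.a * |p 2| ^ m.b * p 0 ^ m.c * hyperbolicTime p ^ m.e := by
        simp [eval, abs_mul, abs_pow, abs_of_pos (zpow_pos ht _), abs_of_pos (zpow_pos hs _)]
    _ ≤ |m.coeff| * p 0 ^ m.a * p 0 ^ m.b * p 0 ^ m.c * hyperbolicTime p ^ m.e := by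
        gcongr
        exacts [hx 0, hx 1]
    _ = |m.coeff| * (p 0 ^ (-(n : ℤ) - m.e) * hyperbolicTime p ^ m.e) := by
        rw [show -(n : ℤ) - m.e = m.a + m.b + m.c by omega, zpow_add₀ ht.ne', zpow_add₀ ht.ne',
          zpow_natCast, zpow_natCast]
        ring

lemma abs_evalSum_le {L : List Monomial} {p : Pt} {B : ℝ}
    (h : ∀ m ∈ L, |m.eval p| ≤ |m.coeff| * B) :
    |evalSum L p| ≤ (L.map (|·.coeff|)).sum * B := by
  induction L with
  | nil => simp
  | cons m L ih =>
    simp only [List.forall_mem_cons] at h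
    simp only [evalSum_cons, List.map_cons, List.sum_cons, add_mul]
    exact (abs_add_le _ _).trans (add_le_add h.1 (ih h.2))

lemma IsAdmissible.abs_eval_le_mul_sot (hm : m.IsAdmissible 0) {p : Pt} (hp : p ∈ coneK) :
    |m.eval p| ≤ |m.coeff| * sot p := by
  rcases eq_or_ne m.coeff 0 with hk | hk
  · simp [eval, hk]
  refine (hm.abs_eval_le hk hp).trans (mul_le_mul_of_nonneg_left ?_ (abs_nonneg _))
  have he : 1 ≤ m.e := by simpa using (hm hk).2
  simpa [sot_eq_hyperbolicTime_div] using zpow_neg_mul_zpow_le_div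
    (hyperbolicTime_pos_of_mem_coneK hp) (hyperbolicTime_le_of_mem_coneK hp) he

lemma IsAdmissible.abs_eval_le_mul_inv (hm : m.IsAdmissible n) (hn : 0 < n) {p : Pt}
    (hp : p ∈ coneK) :
    |m.eval p| ≤ |m.coeff| * (hyperbolicTime p)⁻¹ := by
  rcases eq_or_ne m.coeff 0 with hk | hk
  · simp [eval, hk]
  exact (hm.abs_eval_le hk hp).trans (mul_le_mul_of_nonneg_left
    (zpow_neg_sub_mul_zpow_le_inv (one_le_hyperbolicTime_of_mem_coneK hp)
      (hyperbolicTime_le_of_mem_coneK hp) (le_hyperbolicTime_sq_of_mem_coneK hp)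
      (by omega) (hm hk).2) (abs_nonneg _))

end Monomial

def HasMonomialExpansion (n : ℕ) (f : Pt → ℝ) : Prop :=
  ∃ L : List Monomial, (∀ m ∈ L, m.IsAdmissible n) ∧ Set.EqOn f (Monomial.evalSum L) coneK

section HasMonomialExpansion

variable {n : ℕ} {f : Pt → ℝ}

lemma hasMonomialExpansion_sot : HasMonomialExpansion 0 sot := by
  refine ⟨[⟨1, 0, 0, -1, 1⟩], by simp [Monomial.IsAdmissible], fun p _ => ?_⟩
  simp [Monomial.eval, sot, hyperbolicTime, div_eq_mul_inv, mul_comm]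

lemma hasMonomialExpansion_pd (h : HasMonomialExpansion n f) (i : Fin 3) :
    HasMonomialExpansion (n + 1) (pd i f) := by
  obtain ⟨L, hL, hf⟩ := h
  refine ⟨L.flatMap (·.derivTerms i), ?_, fun p hp => Monomial.pd_eq_evalSum_flatMap hf hp i⟩
  simp only [List.mem_flatMap]
  rintro m' ⟨m, hm, hm'⟩
  exact (hL m hm).derivTerms i m' hm'

lemma hasMonomialExpansion_boost (h : HasMonomialExpansion n f) (a : Fin 2) :
    HasMonomialExpansion n (boost a f) := by
  obtain ⟨L, hL, hf⟩ := h
  refine ⟨L.flatMap (·.boostTerms a), ?_, fun p hp => ?_⟩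
  · simp only [List.mem_flatMap]
    rintro m' ⟨m, hm, hm'⟩
    exact (hL m hm).boostTerms a m' hm'
  · rw [boost, Monomial.pd_eq_evalSum_flatMap hf hp, Monomial.pd_eq_evalSum_flatMap hf hp,
      Monomial.boost_evalSum_flatMap_derivTerms L a hp]

lemma hasMonomialExpansion_boostSeq (h : HasMonomialExpansion n f) (J : List (Fin 2)) :
    HasMonomialExpansion n (boostSeq J f) := by
  induction J with
  | nil => exact h
  | cons a J ih => exact hasMonomialExpansion_boost ih a

lemma hasMonomialExpansion_pdSeq (h : HasMonomialExpansion n f) (I : List (Fin 3)) :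
    HasMonomialExpansion (n + I.length) (pdSeq I f) := by
  induction I with
  | nil => exact h
  | cons i I ih => exact hasMonomialExpansion_pd ih i

lemma HasMonomialExpansion.exists_abs_le_mul (h : HasMonomialExpansion n f) {B : Pt → ℝ}
    (hB : ∀ p ∈ coneK, 0 ≤ B p)
    (hmB : ∀ m : Monomial, m.IsAdmissible n → ∀ p ∈ coneK, |m.eval p| ≤ |m.coeff| * B p) :
    ∃ C, 0 < C ∧ ∀ p ∈ coneK, |f p| ≤ C * B p := by
  obtain ⟨L, hL, hf⟩ := h
  have hC : 0 ≤ (L.map (|·.coeff|)).sum := List.sum_nonneg (by simp)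
  refine ⟨1 + (L.map (|·.coeff|)).sum, by positivity, fun p hp => ?_⟩
  rw [hf hp]
  exact (Monomial.abs_evalSum_le fun m hm => hmB m (hL m hm) p hp).trans
    (by gcongr; exacts [hB p hp, le_add_of_nonneg_left zero_le_one])

lemma HasMonomialExpansion.exists_abs_le_mul_sot (h : HasMonomialExpansion 0 f) :
    ∃ C, 0 < C ∧ ∀ p ∈ coneK, |f p| ≤ C * sot p :=
  h.exists_abs_le_mul (fun _ hp => div_nonneg (hyperbolicTime_pos_of_mem_coneK hp).le
    (one_pos.trans (one_lt_of_mem_coneK hp)).le) fun _ hm _ hp => hm.abs_eval_le_mul_sot hp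

lemma HasMonomialExpansion.exists_abs_le_div (h : HasMonomialExpansion n f) (hn : 0 < n) :
    ∃ C, 0 < C ∧ ∀ p ∈ coneK, |f p| ≤ C / hyperbolicTime p := by
  simpa only [div_eq_mul_inv] using h.exists_abs_le_mul
    (fun p hp => (inv_pos.2 (hyperbolicTime_pos_of_mem_coneK hp)).le)
    fun _ hm _ hp => hm.abs_eval_le_mul_inv hn hp

end HasMonomialExpansion

/-- **Derivatives of `s/t` in the cone** (Lemma 4.6). In `K`,
`|∂^I L^J (s/t)| ≤ C (s/t)` if `|I| = 0` and `|∂^I L^J (s/t)| ≤ C s^{−1}` if `|I| > 0`. -/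
theorem sot_derivative_estimate (I : List (Fin 3)) (J : List (Fin 2)) :
    ∃ C : ℝ, 0 < C ∧ ∀ p ∈ coneK,
      (I.length = 0 → |boostSeq J sot p| ≤ C * sot p) ∧
      (0 < I.length →
        |pdSeq I (boostSeq J sot) p| ≤ C / Real.sqrt ((p 0)^2 - (rad p)^2)) := by
  have hJ := hasMonomialExpansion_boostSeq hasMonomialExpansion_sot J
  rcases Nat.eq_zero_or_pos I.length with hI | hI
  · obtain ⟨C, hC, h⟩ := hJ.exists_abs_le_mul_sot
    exact ⟨C, hC, fun p hp => ⟨fun _ => h p hp, fun h' => absurd hI h'.ne'⟩⟩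
  · obtain ⟨C, hC, h⟩ := (hasMonomialExpansion_pdSeq hJ I).exists_abs_le_div (by omega)
    exact ⟨C, hC, fun p hp => ⟨fun h' => absurd h' hI.ne', fun _ => h p hp⟩⟩
end
end

section
/- Klainerman–Sobolev estimate on hyperboloids. There exists a universal constant C > 0 such that for every smooth function φ supported in the cone K and every s ≥ 2: sup_{(t,x) ∈ H_s} |t φ(t, x)| ≤ C Σ_{|J| ≤ 2} ‖L^J φ‖_{L²_f(H_s)}, where the sum runs over all finite sequences J of indices in {1,2} of length at most 2. -/
noncomputable section

open MeasureTheory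

/-!
Restrict to `H_s` through the chart `x ↦ (√(s² + |x|²), x)`. By the chain rule,
`∂_{x^a} (f ∘ hyp s) = (L_a f / t) ∘ hyp s` and `∂_{x^a} t = x^a / t`, so the mixed derivative
`∂_{x²} ∂_{x¹} (tφ)²` is a combination of products of `φ`, `L_a φ` and `L_2 L_1 φ` with
coefficients bounded by `|x^a / t| ≤ 1`. Since `φ` is supported in `K`, its restriction to `H_s`
has compact support, so integrating in `x¹` and then in `x²` bounds `(tφ)²` at any point by the
`L¹` norm of that mixed derivative; by AM-GM this is at most `4 Σ ‖L^J φ‖²_{L²_f(H_s)}`, giving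
`C = 2`.
-/

open Filter Topology Function Set

section Calculus

variable {E : Type*} [NormedAddCommGroup E]

theorem norm_le_integral_norm_of_hasDerivAt [NormedSpace ℝ E] [CompleteSpace E] {F G : ℝ → E}
    (hF : ∀ y, HasDerivAt F (G y) y) (hG : Integrable G) (hFc : HasCompactSupport F) (c : ℝ) :
    ‖F c‖ ≤ ∫ y, ‖G y‖ := by
  have hbot : Tendsto F atBot (𝓝 0) := by
    rw [hasCompactSupport_iff_eventuallyEq, coclosedCompact_eq_cocompact] at hFc
    exact hFc.filter_mono atBot_le_cocompact |>.tendsto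
  rw [← sub_zero (F c), ← integral_Iic_of_hasDerivAt_of_tendsto' (fun y _ => hF y)
    hG.integrableOn hbot]
  exact (norm_integral_le_integral_norm _).trans
    (setIntegral_le_integral hG.norm (Eventually.of_forall fun _ => norm_nonneg _))

theorem HasCompactSupport.integrable_comp_update {ι : Type*} [DecidableEq ι]
    {f : (ι → ℝ) → E} (hf : Continuous f) (hfc : HasCompactSupport f) (x : ι → ℝ) (i : ι) :
    Integrable (fun y => f (update x i y)) :=
  (hf.comp (continuous_const.update i continuous_id)).integrable_of_hasCompactSupport
    (hfc.comp_isClosedEmbedding (isClosedEmbedding_update x i))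

theorem norm_le_integral_norm_comp_update [NormedSpace ℝ E] [CompleteSpace E] {ι : Type*}
    [DecidableEq ι] {f f' : (ι → ℝ) → E} (i : ι)
    (hf : ∀ x, HasDerivAt (fun y => f (update x i y)) (f' x) (x i))
    (hfc : HasCompactSupport f) (hf'cont : Continuous f') (hf'c : HasCompactSupport f')
    (x : ι → ℝ) : ‖f x‖ ≤ ∫ y, ‖f' (update x i y)‖ := by
  have hderiv (y : ℝ) : HasDerivAt (fun y => f (update x i y)) (f' (update x i y)) y := by
    simpa using hf (update x i y)
  simpa using norm_le_integral_norm_of_hasDerivAt hderiv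
    (hf'c.integrable_comp_update hf'cont x i)
    (hfc.comp_isClosedEmbedding (isClosedEmbedding_update x i)) (x i)

theorem integrable_prod_of_integrable_fin_two_arrow {f : (Fin 2 → ℝ) → E} (hf : Integrable f) :
    Integrable (fun p : ℝ × ℝ => f ![p.1, p.2]) ((volume : Measure ℝ).prod volume) := by
  rw [← Measure.volume_eq_prod]
  exact ((volume_preserving_finTwoArrow ℝ).symm _).integrable_comp_emb
    (MeasurableEquiv.measurableEmbedding _) |>.mpr hf

theorem integrable_integral_fin_two_arrow [NormedSpace ℝ E] {f : (Fin 2 → ℝ) → E}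
    (hf : Integrable f) : Integrable (fun y => ∫ z, f ![y, z]) :=
  (integrable_prod_of_integrable_fin_two_arrow hf).integral_prod_left

theorem integral_fin_two_arrow [NormedSpace ℝ E] {f : (Fin 2 → ℝ) → E} (hf : Integrable f) :
    ∫ x, f x = ∫ y, ∫ z, f ![y, z] := by
  rw [← integral_prod _ (integrable_prod_of_integrable_fin_two_arrow hf),
    ← Measure.volume_eq_prod, ← ((volume_preserving_finTwoArrow ℝ).symm _).integral_comp
      (MeasurableEquiv.measurableEmbedding _)]
  rfl

theorem update_update_fin_two (x : Fin 2 → ℝ) (y z : ℝ) :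
    update (update x 0 y) 1 z = ![y, z] := by
  ext i; fin_cases i <;> simp

theorem norm_le_integral_norm_of_mixed_hasDerivAt [NormedSpace ℝ E] [CompleteSpace E]
    {g A B : (Fin 2 → ℝ) → E}
    (hg : ∀ x, HasDerivAt (fun y => g (update x 0 y)) (A x) (x 0))
    (hA : ∀ x, HasDerivAt (fun y => A (update x 1 y)) (B x) (x 1))
    (hgc : HasCompactSupport g) (hAcont : Continuous A) (hAc : HasCompactSupport A)
    (hBcont : Continuous B) (hBc : HasCompactSupport B) (x : Fin 2 → ℝ) :
    ‖g x‖ ≤ ∫ x, ‖B x‖ := by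
  have hBint : Integrable B := hBcont.integrable_of_hasCompactSupport hBc
  calc ‖g x‖ ≤ ∫ y, ‖A (update x 0 y)‖ := norm_le_integral_norm_comp_update 0 hg hgc hAcont hAc x
    _ ≤ ∫ y, ∫ z, ‖B ![y, z]‖ := by
      refine integral_mono_of_nonneg (Eventually.of_forall fun _ => norm_nonneg _)
        (integrable_integral_fin_two_arrow hBint.norm) (Eventually.of_forall fun y => ?_)
      simpa only [update_update_fin_two] using
        norm_le_integral_norm_comp_update 1 hA hAc hBcont hBc (update x 0 y)
    _ = ∫ x, ‖B x‖ := (integral_fin_two_arrow hBint.norm).symm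

end Calculus

section Hyperboloid

variable {s : ℝ}

theorem sq_le_sq_add_sq (x : Fin 2 → ℝ) (a : Fin 2) : x a ^ 2 ≤ x 0 ^ 2 + x 1 ^ 2 := by
  fin_cases a
  · exact le_add_of_nonneg_right (sq_nonneg _)
  · exact le_add_of_nonneg_left (sq_nonneg _)

theorem hyp_zero_sq (s : ℝ) (x : Fin 2 → ℝ) : hyp s x 0 ^ 2 = s ^ 2 + x 0 ^ 2 + x 1 ^ 2 :=
  Real.sq_sqrt (by positivity)

theorem hyp_zero_pos (hs : s ≠ 0) (x : Fin 2 → ℝ) : 0 < hyp s x 0 :=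
  Real.sqrt_pos.mpr (by positivity)

theorem abs_le_hyp_zero (s : ℝ) (x : Fin 2 → ℝ) (a : Fin 2) : |x a| ≤ hyp s x 0 :=
  Real.abs_le_sqrt (by linarith [sq_le_sq_add_sq x a, sq_nonneg s])

theorem hyp_succ (s : ℝ) (x : Fin 2 → ℝ) (a : Fin 2) : hyp s x a.succ = x a := by
  fin_cases a <;> rfl

theorem rad_hyp (s : ℝ) (x : Fin 2 → ℝ) : rad (hyp s x) = √(x 0 ^ 2 + x 1 ^ 2) := rfl

@[fun_prop]
theorem continuous_hyp (s : ℝ) : Continuous (hyp s) := by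
  refine continuous_pi fun i => ?_
  fin_cases i
  · exact (by fun_prop : Continuous fun x : Fin 2 → ℝ => √(s ^ 2 + x 0 ^ 2 + x 1 ^ 2))
  · exact continuous_apply 0
  · exact continuous_apply 1

theorem hyp_eq_of_sq_sub_sq {p : Pt} (hp0 : 0 < p 0) (hp : p 0 ^ 2 - rad p ^ 2 = s ^ 2) :
    hyp s ![p 1, p 2] = p := by
  have hrad : rad p ^ 2 = p 1 ^ 2 + p 2 ^ 2 := Real.sq_sqrt (by positivity)
  ext i
  fin_cases i
  · simp only [hyp, Matrix.cons_val_zero, Matrix.cons_val_one]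
    rw [show s ^ 2 + p 1 ^ 2 + p 2 ^ 2 = p 0 ^ 2 by linarith, Real.sqrt_sq hp0.le]
    rfl
  all_goals rfl

theorem hasDerivAt_hyp_zero_update (hs : s ≠ 0) (x : Fin 2 → ℝ) (a : Fin 2) :
    HasDerivAt (fun y => hyp s (update x a y) 0) (x a / hyp s x 0) (x a) := by
  have hq : HasDerivAt (fun y => s ^ 2 + update x a y 0 ^ 2 + update x a y 1 ^ 2)
      (2 * x a) (x a) := by
    have hu := hasDerivAt_pi.mp (hasDerivAt_update x a (x a))
    refine ((((hu 0).fun_pow 2).const_add _).add ((hu 1).fun_pow 2)).congr_deriv ?_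
    fin_cases a <;> simp
  refine (hq.sqrt (by simp only [update_eq_self]; positivity)).congr_deriv ?_
  simp only [update_eq_self, hyp, Matrix.cons_val_zero]
  field_simp

theorem hasDerivAt_hyp_update (hs : s ≠ 0) (x : Fin 2 → ℝ) (a : Fin 2) :
    HasDerivAt (fun y => hyp s (update x a y))
      ((x a / hyp s x 0) • Pi.single 0 1 + Pi.single a.succ 1) (x a) := by
  have hu := hasDerivAt_pi.mp (hasDerivAt_update x a (x a))
  refine hasDerivAt_pi.mpr fun i => ?_
  fin_cases i
  · simpa using hasDerivAt_hyp_zero_update hs x a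
  · convert hu 0 using 1 <;> fin_cases a <;> simp [hyp]
  · convert hu 1 using 1 <;> fin_cases a <;> simp [hyp]

theorem hasDerivAt_comp_hyp_update (hs : s ≠ 0) {ξ : Pt → ℝ} {x : Fin 2 → ℝ}
    (hξ : DifferentiableAt ℝ ξ (hyp s x)) (a : Fin 2) :
    HasDerivAt (fun y => ξ (hyp s (update x a y))) (boost a ξ (hyp s x) / hyp s x 0) (x a) := by
  have hξ' : HasFDerivAt ξ (fderiv ℝ ξ (hyp s x)) (hyp s (update x a (x a))) := by
    simpa using hξ.hasFDerivAt
  refine (hξ'.comp_hasDerivAt (x a) (hasDerivAt_hyp_update hs x a)).congr_deriv ?_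
  simp only [boost, pd, hyp_succ, map_add, map_smul, smul_eq_mul]
  field_simp [(hyp_zero_pos hs x).ne']

end Hyperboloid

section Support

/-- The interior of `coneKᶜ`, where the derivatives of a function vanishing off `coneK` vanish. -/
def coneExterior : Set Pt := {p | p 0 - 1 < rad p}

theorem isOpen_coneExterior : IsOpen coneExterior :=
  isOpen_lt (by fun_prop) (by unfold rad; fun_prop)

theorem boost_eqOn_zero {U : Set Pt} (hU : IsOpen U) {ξ : Pt → ℝ} (hξ : EqOn ξ 0 U)
    (a : Fin 2) : EqOn (boost a ξ) 0 U := by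
  intro p hp
  have hfderiv : fderiv ℝ ξ p = 0 := by
    rw [(hξ.eventuallyEq_of_mem (hU.mem_nhds hp)).fderiv_eq]
    exact fderiv_const_apply 0
  simp [boost, pd, hfderiv]

theorem ContDiff.boost {n m : WithTop ℕ∞} {ξ : Pt → ℝ} (hξ : ContDiff ℝ n ξ) (hmn : m + 1 ≤ n)
    (a : Fin 2) : ContDiff ℝ m (boost a ξ) := by
  have hpd (i : Fin 3) : ContDiff ℝ m (pd i ξ) := (hξ.fderiv_right hmn).clm_apply contDiff_const
  exact ((contDiff_apply ℝ ℝ a.succ).mul (hpd 0)).add ((contDiff_apply ℝ ℝ 0).mul (hpd a.succ))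

theorem hyp_mem_coneExterior {s : ℝ} {x : Fin 2 → ℝ} (hx : s ^ 2 < ‖x‖) :
    hyp s x ∈ coneExterior := by
  have hr : ‖x‖ ≤ rad (hyp s x) :=
    (pi_norm_le_iff_of_nonneg (Real.sqrt_nonneg _)).mpr fun i =>
      Real.abs_le_sqrt (sq_le_sq_add_sq x i)
  have ht : hyp s x 0 ^ 2 = s ^ 2 + rad (hyp s x) ^ 2 := by
    rw [hyp_zero_sq, rad_hyp, Real.sq_sqrt (by positivity)]; ring
  have ht0 : 0 ≤ hyp s x 0 := Real.sqrt_nonneg _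
  show hyp s x 0 - 1 < rad (hyp s x)
  nlinarith [norm_nonneg x]

theorem HasCompactSupport.of_eq_zero_of_hyp_mem (s : ℝ) {F : (Fin 2 → ℝ) → ℝ}
    (hF : ∀ x, hyp s x ∈ coneExterior → F x = 0) : HasCompactSupport F :=
  HasCompactSupport.intro (isCompact_closedBall 0 (s ^ 2)) fun x hx =>
    hF x (hyp_mem_coneExterior (by simpa using hx))

theorem integrable_sq_comp_hyp (s : ℝ) {f : Pt → ℝ} (hf : Continuous f)
    (hf₀ : EqOn f 0 coneExterior) : Integrable (fun x => f (hyp s x) ^ 2) :=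
  (by fun_prop : Continuous fun x => f (hyp s x) ^ 2).integrable_of_hasCompactSupport
    (HasCompactSupport.of_eq_zero_of_hyp_mem s fun x hx => by simp [hf₀ hx])

end Support

section WeightedSquare

variable {s : ℝ} {φ : Pt → ℝ}

/-- `(tφ)²` on `H_s` in the chart `x`; `hypSqD1` is its `∂_{x¹}` and `hypSqD12` the `∂_{x²}` of
that (the spatial index `a : Fin 2` stands for `x^{a+1}`). -/
def hypSq (s : ℝ) (φ : Pt → ℝ) (x : Fin 2 → ℝ) : ℝ := (hyp s x 0 * φ (hyp s x)) ^ 2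

def hypSqD1 (s : ℝ) (φ : Pt → ℝ) (x : Fin 2 → ℝ) : ℝ :=
  2 * x 0 * φ (hyp s x) ^ 2 + 2 * hyp s x 0 * φ (hyp s x) * boost 0 φ (hyp s x)

def hypSqD12 (s : ℝ) (φ : Pt → ℝ) (x : Fin 2 → ℝ) : ℝ :=
  4 * (x 0 / hyp s x 0) * φ (hyp s x) * boost 1 φ (hyp s x)
    + 2 * (x 1 / hyp s x 0) * φ (hyp s x) * boost 0 φ (hyp s x)
    + 2 * boost 1 φ (hyp s x) * boost 0 φ (hyp s x)
    + 2 * φ (hyp s x) * boost 1 (boost 0 φ) (hyp s x)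

theorem hasDerivAt_hypSq (hs : s ≠ 0) (hφ : Differentiable ℝ φ) (x : Fin 2 → ℝ) :
    HasDerivAt (fun y => hypSq s φ (update x 0 y)) (hypSqD1 s φ x) (x 0) := by
  refine (((hasDerivAt_hyp_zero_update hs x 0).mul
    (hasDerivAt_comp_hyp_update hs (hφ _) 0)).fun_pow 2).congr_deriv ?_
  simp only [update_eq_self, Pi.mul_apply, hypSqD1]
  field_simp [(hyp_zero_pos hs x).ne']
  ring

theorem hasDerivAt_hypSqD1 (hs : s ≠ 0) (hφ : Differentiable ℝ φ)
    (hφ₀ : Differentiable ℝ (boost 0 φ)) (x : Fin 2 → ℝ) :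
    HasDerivAt (fun y => hypSqD1 s φ (update x 1 y)) (hypSqD12 s φ x) (x 1) := by
  have hx₀ : HasDerivAt (fun y => update x 1 y 0) 0 (x 1) := by
    simpa using hasDerivAt_pi.mp (hasDerivAt_update x 1 (x 1)) 0
  have ht := hasDerivAt_hyp_zero_update hs x 1
  have hψ := hasDerivAt_comp_hyp_update hs (hφ (hyp s x)) 1
  have hψ₀ := hasDerivAt_comp_hyp_update hs (hφ₀ (hyp s x)) 1
  refine ((((hx₀.const_mul 2).mul (hψ.fun_pow 2)).add
    (((ht.const_mul 2).mul hψ).mul hψ₀))).congr_deriv ?_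
  simp only [update_eq_self, Pi.mul_apply, hypSqD12]
  field_simp [(hyp_zero_pos hs x).ne']
  ring

theorem abs_mul_mul_le_of_abs_le_one {c : ℝ} (hc : |c| ≤ 1) (u v : ℝ) :
    |c * u * v| ≤ (u ^ 2 + v ^ 2) / 2 := by
  rw [abs_mul, abs_mul]
  nlinarith [abs_nonneg c, mul_nonneg (abs_nonneg u) (abs_nonneg v), sq_nonneg (|u| - |v|),
    sq_abs u, sq_abs v]

theorem abs_hypSqD12_le (hs : s ≠ 0) (φ : Pt → ℝ) (x : Fin 2 → ℝ) :
    |hypSqD12 s φ x| ≤ 4 * (φ (hyp s x) ^ 2 + boost 0 φ (hyp s x) ^ 2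
      + boost 1 φ (hyp s x) ^ 2 + boost 1 (boost 0 φ) (hyp s x) ^ 2) := by
  have hc (a : Fin 2) : |x a / hyp s x 0| ≤ 1 := by
    rw [abs_div, abs_of_pos (hyp_zero_pos hs x)]
    exact div_le_one_of_le₀ (abs_le_hyp_zero s x a) (hyp_zero_pos hs x).le
  rw [abs_le, hypSqD12]
  set ψ := φ (hyp s x)
  set ψ₀ := boost 0 φ (hyp s x)
  set ψ₁ := boost 1 φ (hyp s x)
  set ψ₁₀ := boost 1 (boost 0 φ) (hyp s x)
  have h₁ := abs_le.mp (abs_mul_mul_le_of_abs_le_one (hc 0) ψ ψ₁)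
  have h₂ := abs_le.mp (abs_mul_mul_le_of_abs_le_one (hc 1) ψ ψ₀)
  have h₃ := abs_le.mp (abs_mul_mul_le_of_abs_le_one abs_one.le ψ₁ ψ₀)
  have h₄ := abs_le.mp (abs_mul_mul_le_of_abs_le_one abs_one.le ψ ψ₁₀)
  constructor <;> nlinarith [sq_nonneg ψ, sq_nonneg ψ₀, sq_nonneg ψ₁, sq_nonneg ψ₁₀]

theorem sq_L2f (s : ℝ) (f : Pt → ℝ) : L2f s f ^ 2 = ∫ x, f (hyp s x) ^ 2 :=
  Real.sq_sqrt (integral_nonneg fun _ => sq_nonneg _)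

theorem integral_abs_hypSqD12_le (hs : s ≠ 0) (hφ : ContDiff ℝ 2 φ)
    (hφ₀ : EqOn φ 0 coneExterior) :
    ∫ x, |hypSqD12 s φ x| ≤ 4 * (L2f s φ ^ 2 + L2f s (boost 0 φ) ^ 2
      + L2f s (boost 1 φ) ^ 2 + L2f s (boost 1 (boost 0 φ)) ^ 2) := by
  have hL (a : Fin 2) : ContDiff ℝ 1 (boost a φ) := hφ.boost (by norm_num) a
  have hL₀ := boost_eqOn_zero isOpen_coneExterior hφ₀
  have i := integrable_sq_comp_hyp s hφ.continuous hφ₀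
  have i₀ := integrable_sq_comp_hyp s (hL 0).continuous (hL₀ 0)
  have i₁ := integrable_sq_comp_hyp s (hL 1).continuous (hL₀ 1)
  have i₁₀ := integrable_sq_comp_hyp s ((hL 0).boost (m := 0) (by norm_num) 1).continuous
    (boost_eqOn_zero isOpen_coneExterior (hL₀ 0) 1)
  simp only [sq_L2f]
  rw [← integral_add i i₀, ← integral_add (i.fun_add i₀) i₁,
    ← integral_add ((i.fun_add i₀).fun_add i₁) i₁₀, ← integral_const_mul]
  exact integral_mono_of_nonneg (Eventually.of_forall fun _ => abs_nonneg _)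
    ((((i.fun_add i₀).fun_add i₁).fun_add i₁₀).const_mul 4)
    (Eventually.of_forall (abs_hypSqD12_le hs φ))

theorem sq_hyp_zero_mul_le (hs : s ≠ 0) (hφ : ContDiff ℝ 2 φ) (hφ₀ : EqOn φ 0 coneExterior)
    (x : Fin 2 → ℝ) :
    (hyp s x 0 * φ (hyp s x)) ^ 2 ≤ 4 * (L2f s φ ^ 2 + L2f s (boost 0 φ) ^ 2
      + L2f s (boost 1 φ) ^ 2 + L2f s (boost 1 (boost 0 φ)) ^ 2) := by
  have hL (a : Fin 2) : ContDiff ℝ 1 (boost a φ) := hφ.boost (by norm_num) a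
  have hvanish (x : Fin 2 → ℝ) (hx : hyp s x ∈ coneExterior) :
      φ (hyp s x) = 0 ∧ boost 1 φ (hyp s x) = 0 :=
    ⟨hφ₀ hx, boost_eqOn_zero isOpen_coneExterior hφ₀ 1 hx⟩
  have hc₀ := (hL 0).continuous
  have hc₁ := (hL 1).continuous
  have hc₁₀ := ((hL 0).boost (m := 0) (by norm_num) 1).continuous
  have ht := fun x => (hyp_zero_pos hs x).ne'
  have hbound := norm_le_integral_norm_of_mixed_hasDerivAt (g := hypSq s φ)
    (hasDerivAt_hypSq hs (hφ.differentiable (by norm_num)))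
    (hasDerivAt_hypSqD1 hs (hφ.differentiable (by norm_num)) ((hL 0).differentiable one_ne_zero))
    (HasCompactSupport.of_eq_zero_of_hyp_mem s fun x hx => by simp [hypSq, hvanish x hx])
    (by unfold hypSqD1; fun_prop)
    (HasCompactSupport.of_eq_zero_of_hyp_mem s fun x hx => by simp [hypSqD1, hvanish x hx])
    (by unfold hypSqD12; fun_prop (disch := exact ht))
    (HasCompactSupport.of_eq_zero_of_hyp_mem s fun x hx => by simp [hypSqD12, hvanish x hx]) x
  simp only [Real.norm_eq_abs, hypSq, abs_sq] at hbound
  exact hbound.trans (integral_abs_hypSqD12_le hs hφ hφ₀)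

end WeightedSquare

/-- **Klainerman–Sobolev estimate on hyperboloids** (Lemma 4.7). For smooth `φ` supported in
the cone `K` and `s ≥ 2`: `sup_{H_s} |t φ| ≤ C Σ_{|J|≤2} ‖L^J φ‖_{L²_f(H_s)}`. -/
theorem klainerman_sobolev_hyperboloid :
    ∃ C : ℝ, 0 < C ∧
      ∀ φ : Pt → ℝ, ContDiff ℝ (⊤ : ℕ∞) φ → (∀ p, p ∉ coneK → φ p = 0) →
      ∀ s : ℝ, 2 ≤ s →
      ∀ p : Pt, 0 < p 0 → (p 0)^2 - (rad p)^2 = s^2 →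
        |p 0 * φ p|
          ≤ C * (L2f s φ
              + (∑ a : Fin 2, L2f s (boost a φ))
              + ∑ a : Fin 2, ∑ b : Fin 2, L2f s (boost a (boost b φ))) := by
  refine ⟨2, two_pos, fun φ hφ hφK s hs p hp0 hps => ?_⟩
  have hφ₀ : EqOn φ 0 coneExterior := fun q hq => hφK q (lt_asymm hq : ¬ rad q < q 0 - 1)
  have hsq := sq_hyp_zero_mul_le (by positivity) (hφ.of_le (by norm_cast)) hφ₀ ![p 1, p 2]
  rw [hyp_eq_of_sq_sub_sq hp0 hps] at hsq
  have hL2f (f : Pt → ℝ) : 0 ≤ L2f s f := Real.sqrt_nonneg _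
  simp only [Fin.sum_univ_two]
  refine abs_le_of_sq_le_sq (hsq.trans ?_) ?_ <;>
  nlinarith [hL2f φ, hL2f (boost 0 φ), hL2f (boost 1 φ), hL2f (boost 0 (boost 0 φ)),
    hL2f (boost 0 (boost 1 φ)), hL2f (boost 1 (boost 0 φ)), hL2f (boost 1 (boost 1 φ))]
end
end
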